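/- Let a, b ≥ 0 and κ > 0. The system c₁(1+κc₂)=a, c₂(1+κc₁)=b, c₃=κc₁c₂ has a unique solution with c₁,c₂,c₃ ≥ 0, given explicitly by c₁ = ½√(2(a+b)/κ + (b−a)² + κ⁻²) − ½(κ⁻¹ + (b−a)), c₂ = ½√(2(a+b)/κ + (b−a)² + κ⁻²) − ½(κ⁻¹ − (b−a)), c₃ = κc₁c₂. -/
import Mathlib


open Real

/-- Uniqueness and explicit form of the nonnegative equilibrium of the
three-component fast-sorption limit system. -/
theorem equilibrium_unique_explicit (a b κ : ℝ) (ha : 0 ≤ a) (hb : 0 ≤ b) (hκ : 0 < κ) :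
    ∀ c₁ c₂ c₃ : ℝ,
      (0 ≤ c₁ ∧ 0 ≤ c₂ ∧ 0 ≤ c₃ ∧
        c₁ * (1 + κ * c₂) = a ∧ c₂ * (1 + κ * c₁) = b ∧ c₃ = κ * c₁ * c₂)
      ↔
      (c₁ = Real.sqrt (2 * (a + b) / κ + (b - a) ^ 2 + (κ⁻¹) ^ 2) / 2 - (κ⁻¹ + (b - a)) / 2 ∧
       c₂ = Real.sqrt (2 * (a + b) / κ + (b - a) ^ 2 + (κ⁻¹) ^ 2) / 2 - (κ⁻¹ - (b - a)) / 2 ∧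
       c₃ = κ * c₁ * c₂) := by
  intro c₁ c₂ c₃
  have hκ0 : κ ≠ 0 := hκ.ne'
  have hinv : κ * κ⁻¹ = 1 := mul_inv_cancel₀ hκ0
  have hκ' : (0:ℝ) ≤ κ⁻¹ := (inv_pos.mpr hκ).le
  have hX : 0 ≤ 2 * (a + b) / κ + (b - a) ^ 2 + (κ⁻¹) ^ 2 := by positivity
  set S := Real.sqrt (2 * (a + b) / κ + (b - a) ^ 2 + (κ⁻¹) ^ 2) with hSdef
  have hS0 : 0 ≤ S := hSdef ▸ Real.sqrt_nonneg _
  have hS2 : S ^ 2 = 2 * (a + b) / κ + (b - a) ^ 2 + (κ⁻¹) ^ 2 := by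
    rw [hSdef]; exact Real.sq_sqrt hX
  constructor
  · rintro ⟨h1, h2, h3, h4, h5, h6⟩
    have hba : c₂ - c₁ = b - a := by linear_combination h5 - h4
    have hnn : 0 ≤ 2 * c₁ + κ⁻¹ + (b - a) := by linarith
    have hsq : 2 * (a + b) / κ + (b - a) ^ 2 + (κ⁻¹) ^ 2
        = (2 * c₁ + κ⁻¹ + (b - a)) ^ 2 := by
      linear_combination (-(4 * κ⁻¹ + 4 * c₁)) * h4 + 4 * c₁ * h5 + 4 * c₁ * c₂ * hinv
    have hSeq : S = 2 * c₁ + κ⁻¹ + (b - a) := by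
      rw [hSdef, hsq, Real.sqrt_sq hnn]
    refine ⟨by linarith, by linarith, h6⟩
  · rintro ⟨e1, e2, e3⟩
    have key1 : (κ⁻¹ + (b - a)) ^ 2 + 4 * a / κ
        = 2 * (a + b) / κ + (b - a) ^ 2 + (κ⁻¹) ^ 2 := by
      field_simp; ring
    have key2 : (κ⁻¹ - (b - a)) ^ 2 + 4 * b / κ
        = 2 * (a + b) / κ + (b - a) ^ 2 + (κ⁻¹) ^ 2 := by
      field_simp; ring
    have ha' : 0 ≤ 4 * a / κ := by positivity
    have hb' : 0 ≤ 4 * b / κ := by positivity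
    have hu : κ⁻¹ + (b - a) ≤ S := by
      calc κ⁻¹ + (b - a) ≤ |κ⁻¹ + (b - a)| := le_abs_self _
        _ = Real.sqrt ((κ⁻¹ + (b - a)) ^ 2) := (Real.sqrt_sq_eq_abs _).symm
        _ ≤ Real.sqrt (S ^ 2) := Real.sqrt_le_sqrt (by rw [hS2]; linarith)
        _ = S := Real.sqrt_sq hS0
    have hv : κ⁻¹ - (b - a) ≤ S := by
      calc κ⁻¹ - (b - a) ≤ |κ⁻¹ - (b - a)| := le_abs_self _
        _ = Real.sqrt ((κ⁻¹ - (b - a)) ^ 2) := (Real.sqrt_sq_eq_abs _).symm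
        _ ≤ Real.sqrt (S ^ 2) := Real.sqrt_le_sqrt (by rw [hS2]; linarith)
        _ = S := Real.sqrt_sq hS0
    have h1 : 0 ≤ c₁ := by rw [e1]; linarith
    have h2 : 0 ≤ c₂ := by rw [e2]; linarith
    refine ⟨h1, h2, by rw [e3]; exact mul_nonneg (mul_nonneg hκ.le h1) h2, ?_, ?_, e3⟩
    · rw [e1, e2]
      linear_combination (κ / 4) * hS2 + ((a + b) / 2 + κ⁻¹ / 2 - S / 2) * hinv
    · rw [e1, e2]
      linear_combination (κ / 4) * hS2 + ((a + b) / 2 + κ⁻¹ / 2 - S / 2) * hinv
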